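/- If G is a minimal counterexample (as defined in the context), then G contains no path v–u–w such that v, u, w all have degree 3, v has a neighbor of degree 1, and u has no neighbor of degree 1. -/

import Mathlib

/-!
Deleting the closed neighbourhood `N[S]` of an independent set `S` from a minimal counterexample
`G` and adding `S` to an optimal independent dominating set of `G - N[S]` gives
`w(G) < 14 |S| + w(G - N[S])`. As `G` has no 4-cycle, a vertex outside `N[v]` has at most one
neighbour in `N[v]`, so the weight `G - N[v]` gains is one `weightGain` per edge leaving `N[v]`.
At the end `v` of a special path (leaf `x`, path neighbour `u`, third neighbour `a`) the edges
leaving `u` gain at most `4`, which leaves room for the edges leaving `a` unless `a` also carries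
a leaf `t₁` and its last neighbour `t₂` has degree at most two. That configuration is excluded by
deleting `N[{x, a}]` instead.
-/

open Set

/-- The degree of a vertex `v` in a simple graph `G`. -/
noncomputable def deg {V : Type*} (G : SimpleGraph V) (v : V) : ℕ :=
  (G.neighborSet v).ncard

/-- `S` is a dominating set of `G`: every vertex not in `S` has a neighbor in `S`. -/
def IsDomSet {V : Type*} (G : SimpleGraph V) (S : Set V) : Prop :=
  ∀ v ∉ S, ∃ u ∈ S, G.Adj u v

/-- `S` is an independent dominating set of `G`. -/
def IsIndepDomSet {V : Type*} (G : SimpleGraph V) (S : Set V) : Prop :=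
  IsDomSet G S ∧ ∀ u ∈ S, ∀ v ∈ S, ¬ G.Adj u v

/-- The independent domination number `i(G)`. -/
noncomputable def indepDomNum {V : Type*} (G : SimpleGraph V) : ℕ :=
  sInf {n | ∃ S : Set V, IsIndepDomSet G S ∧ S.ncard = n}

/-- The domination number `γ(G)`. -/
noncomputable def domNum {V : Type*} (G : SimpleGraph V) : ℕ :=
  sInf {n | ∃ S : Set V, IsDomSet G S ∧ S.ncard = n}

/-- `G` contains no cycle on 4 vertices as a subgraph. -/
def NoFourCycle {V : Type*} (G : SimpleGraph V) : Prop :=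
  ¬ ∃ a b c d : V, a ≠ b ∧ a ≠ c ∧ a ≠ d ∧ b ≠ c ∧ b ≠ d ∧ c ≠ d ∧
      G.Adj a b ∧ G.Adj b c ∧ G.Adj c d ∧ G.Adj d a

/-- `nk G k` is the number of vertices of degree `k` in `G`. -/
noncomputable def nk {V : Type*} (G : SimpleGraph V) (k : ℕ) : ℕ :=
  {v | deg G v = k}.ncard

/-- The weight of a vertex: 14, 9, 6, 5 according as its degree is 0, 1, 2, 3. -/
noncomputable def wt {V : Type*} (G : SimpleGraph V) (v : V) : ℕ :=
  if deg G v = 0 then 14 else if deg G v = 1 then 9 else if deg G v = 2 then 6 else 5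

/-- The weight of a set of vertices: the sum of their weights. -/
noncomputable def wtSet {V : Type*} (G : SimpleGraph V) (X : Set V) : ℕ :=
  ∑ᶠ v ∈ X, wt G v

/-- The weight of the whole graph `G`. -/
noncomputable def wtGraph {V : Type*} (G : SimpleGraph V) : ℕ :=
  wtSet G Set.univ

/-- `G` is a minimal counterexample: subcubic, no 4-cycle, `14·i(G) > w(G)`,
and every proper subgraph `H` of `G` satisfies `14·i(H) ≤ w(H)`. -/
def MinimalCounterexample {V : Type*} [Fintype V] (G : SimpleGraph V) : Prop :=
  (∀ v, deg G v ≤ 3) ∧ NoFourCycle G ∧ wtGraph G < 14 * indepDomNum G ∧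
    ∀ H : G.Subgraph, H ≠ ⊤ → 14 * indepDomNum H.coe ≤ wtGraph H.coe

open scoped Finset

section IndependentDomination

lemma SimpleGraph.IsIndepSet.not_adj {V : Type*} {G : SimpleGraph V} {S : Set V}
    (hS : G.IsIndepSet S) {p q : V} (hp : p ∈ S) (hq : q ∈ S) : ¬ G.Adj p q := by
  obtain rfl | hne := eq_or_ne p q
  · exact G.loopless.irrefl p
  · exact hS hp hq hne

variable {V : Type*} (G : SimpleGraph V)

lemma isIndepDomSet_of_maximal {S : Set V} (hS : Maximal G.IsIndepSet S) :
    IsIndepDomSet G S := by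
  refine ⟨fun v hv => ?_, fun p hp q hq => hS.1.not_adj hp hq⟩
  by_contra! hno
  have hind : G.IsIndepSet (insert v S) :=
    hS.1.insert fun w hw _ => ⟨fun h => hno w hw h.symm, hno w hw⟩
  exact hv (hS.2 hind (Set.subset_insert v S) (Set.mem_insert v S))

lemma exists_isIndepDomSet [Finite V] : ∃ S, IsIndepDomSet G S := by
  obtain ⟨S, hS⟩ := (Set.toFinite {S : Set V | G.IsIndepSet S}).exists_maximal
    ⟨∅, Set.pairwise_empty _⟩
  exact ⟨S, isIndepDomSet_of_maximal G hS⟩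

lemma indepDomNum_le_ncard {S : Set V} (hS : IsIndepDomSet G S) : indepDomNum G ≤ S.ncard :=
  Nat.sInf_le ⟨S, hS, rfl⟩

lemma exists_isIndepDomSet_ncard_eq [Finite V] :
    ∃ S, IsIndepDomSet G S ∧ S.ncard = indepDomNum G := by
  obtain ⟨S, hS⟩ := exists_isIndepDomSet G
  exact Nat.sInf_mem (s := {n | ∃ S, IsIndepDomSet G S ∧ S.ncard = n}) ⟨_, S, hS, rfl⟩

end IndependentDomination

section Weights

/-- `wt G v` is `degWeight (deg G v)` by definition. -/
def degWeight (d : ℕ) : ℕ :=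
  if d = 0 then 14 else if d = 1 then 9 else if d = 2 then 6 else 5

def weightGain (d : ℕ) : ℕ :=
  degWeight (d - 1) - degWeight d

lemma five_le_degWeight (d : ℕ) : 5 ≤ degWeight d := by
  unfold degWeight; split_ifs <;> omega

lemma six_le_degWeight {d : ℕ} (hd : d ≤ 2) : 6 ≤ degWeight d := by
  unfold degWeight; split_ifs <;> omega

lemma degWeight_pred_le (d : ℕ) : degWeight (d - 1) ≤ degWeight d + weightGain d := by
  unfold weightGain; omega

lemma weightGain_le_five (d : ℕ) : weightGain d ≤ 5 := by
  unfold weightGain degWeight; split_ifs <;> omega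

lemma sum_weightGain_le_five_mul_card {ι : Type*} (s : Finset ι) (f : ι → ℕ) :
    ∑ i ∈ s, weightGain (f i) ≤ 5 * #s := by
  rw [mul_comm, ← smul_eq_mul]
  exact Finset.sum_le_card_nsmul s _ 5 fun i _ => weightGain_le_five _

lemma weightGain_le_three {d : ℕ} (hd : 2 ≤ d) : weightGain d ≤ 3 := by
  unfold weightGain degWeight; split_ifs <;> omega

lemma eq_one_of_six_lt_weightGain_add {d₁ d₂ : ℕ} (h : 6 < weightGain d₁ + weightGain d₂) :
    d₁ = 1 ∧ d₂ ≤ 2 ∨ d₂ = 1 ∧ d₁ ≤ 2 := by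
  revert h; unfold weightGain degWeight; split_ifs <;> omega

end Weights

section DeleteVerts

variable {V : Type*} (G : SimpleGraph V)

lemma deleteVerts_top_ne_top {D : Set V} (hD : D.Nonempty) :
    (⊤ : G.Subgraph).deleteVerts D ≠ ⊤ := by
  intro h
  obtain ⟨d, hd⟩ := hD
  have hverts := congrArg SimpleGraph.Subgraph.verts h
  rw [SimpleGraph.Subgraph.deleteVerts_verts, SimpleGraph.Subgraph.verts_top] at hverts
  exact (hverts.symm ▸ Set.mem_univ d : d ∈ Set.univ \ D).2 hd

lemma deleteVerts_coe_adj {D : Set V} (p q : ((⊤ : G.Subgraph).deleteVerts D).verts) :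
    ((⊤ : G.Subgraph).deleteVerts D).coe.Adj p q ↔ G.Adj p q := by
  simp [p.2.2, q.2.2]

lemma deg_deleteVerts (D : Set V) (h : ((⊤ : G.Subgraph).deleteVerts D).verts) :
    deg ((⊤ : G.Subgraph).deleteVerts D).coe h = (G.neighborSet h \ D).ncard := by
  have himage : Subtype.val '' ((⊤ : G.Subgraph).deleteVerts D).coe.neighborSet h =
      G.neighborSet h \ D := by
    ext y
    constructor
    · rintro ⟨y, hy, rfl⟩
      exact ⟨(deleteVerts_coe_adj G h y).1 hy, y.2.2⟩
    · rintro ⟨hy, hyD⟩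
      exact ⟨⟨y, trivial, hyD⟩, (deleteVerts_coe_adj G h ⟨y, trivial, hyD⟩).2 hy, rfl⟩
  rw [deg, ← himage, Set.ncard_image_of_injective _ Subtype.val_injective]

variable [Fintype V] [DecidableRel G.Adj]

lemma deg_eq_degree (v : V) : deg G v = G.degree v := by
  rw [deg, Set.ncard_eq_toFinset_card', ← G.card_neighborFinset_eq_degree]
  rfl

lemma wtGraph_eq_sum : wtGraph G = ∑ v, degWeight (G.degree v) := by
  rw [wtGraph, wtSet, finsum_mem_univ, finsum_eq_sum_of_fintype]
  exact Finset.sum_congr rfl fun v _ => congrArg degWeight (deg_eq_degree G v)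

variable [DecidableEq V]

lemma wtGraph_deleteVerts (D : Finset V) :
    wtGraph ((⊤ : G.Subgraph).deleteVerts D).coe =
      ∑ h ∈ Dᶜ, degWeight #(G.neighborFinset h \ D) := by
  have hverts : ((⊤ : G.Subgraph).deleteVerts D).verts = ↑Dᶜ := by
    ext; simp
  have hdeg (h : ((⊤ : G.Subgraph).deleteVerts D).verts) :
      wt ((⊤ : G.Subgraph).deleteVerts D).coe h = degWeight #(G.neighborFinset h \ D) := by
    change degWeight _ = _
    rw [deg_deleteVerts, ← Set.ncard_coe_finset, Finset.coe_sdiff, G.coe_neighborFinset]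
  rw [wtGraph, wtSet, finsum_mem_univ, finsum_congr hdeg,
    finsum_set_coe_eq_finsum_mem (f := fun h => degWeight #(G.neighborFinset h \ D)), hverts,
    finsum_mem_coe_finset]

lemma sum_sum_sdiff_eq_sum_card_inter_mul (D : Finset V) (f : V → ℕ) :
    ∑ d ∈ D, ∑ h ∈ G.neighborFinset d \ D, f h =
      ∑ h ∈ Dᶜ, #(G.neighborFinset h ∩ D) * f h := by
  simp_rw [← smul_eq_mul, ← Finset.sum_const]
  refine Finset.sum_comm' fun d h => ?_
  simp only [Finset.mem_sdiff, Finset.mem_inter, Finset.mem_compl, SimpleGraph.mem_neighborFinset,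
    G.adj_comm d h]
  tauto

/-- Each vertex outside `D` loses at most one edge, so its weight rises by at most `weightGain` of
its degree; the double sum counts these rises edge by edge. -/
lemma wtGraph_deleteVerts_add_le (D : Finset V)
    (hD : ∀ h ∉ D, #(G.neighborFinset h ∩ D) ≤ 1) :
    wtGraph ((⊤ : G.Subgraph).deleteVerts D).coe + ∑ d ∈ D, degWeight (G.degree d) ≤
      wtGraph G + ∑ d ∈ D, ∑ h ∈ G.neighborFinset d \ D, weightGain (G.degree h) := by
  have hpoint : ∀ h ∈ Dᶜ, degWeight #(G.neighborFinset h \ D) ≤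
      degWeight (G.degree h) + #(G.neighborFinset h ∩ D) * weightGain (G.degree h) := by
    intro h hh
    have hsplit := Finset.card_sdiff_add_card_inter (G.neighborFinset h) D
    rw [G.card_neighborFinset_eq_degree] at hsplit
    rcases Nat.le_one_iff_eq_zero_or_eq_one.1 (hD h (Finset.mem_compl.1 hh)) with h0 | h1
    · rw [h0, add_zero] at hsplit
      simp [hsplit]
    · rw [h1, one_mul, show #(G.neighborFinset h \ D) = G.degree h - 1 by omega]
      exact degWeight_pred_le _
  rw [wtGraph_deleteVerts, wtGraph_eq_sum, ← Finset.sum_compl_add_sum D,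
    sum_sum_sdiff_eq_sum_card_inter_mul, add_right_comm, ← Finset.sum_add_distrib]
  exact Nat.add_le_add_right (Finset.sum_le_sum hpoint) _

end DeleteVerts

section Reduction

variable {V : Type*} (G : SimpleGraph V)

/-- A minimum independent dominating set of `G - D` together with `S` is an independent
dominating set of `G`. -/
lemma indepDomNum_le_deleteVerts_add [Finite V] {S D : Set V} (hS : G.IsIndepSet S)
    (hD : ∀ d, d ∈ D ↔ d ∈ S ∨ ∃ s ∈ S, G.Adj s d) :
    indepDomNum G ≤ indepDomNum ((⊤ : G.Subgraph).deleteVerts D).coe + S.ncard := by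
  obtain ⟨T, hT, hTcard⟩ := exists_isIndepDomSet_ncard_eq ((⊤ : G.Subgraph).deleteVerts D).coe
  have hTD : ∀ t ∈ Subtype.val '' T, t ∉ D := by
    rintro _ ⟨t, -, rfl⟩
    exact t.2.2
  have hIDS : IsIndepDomSet G (Subtype.val '' T ∪ S) := by
    refine ⟨fun v hv => ?_, fun p hp q hq hpq => ?_⟩
    · by_cases hvD : v ∈ D
      · obtain hvS | ⟨s, hs, hsv⟩ := (hD v).1 hvD
        · exact absurd (Or.inr hvS) hv
        · exact ⟨s, Or.inr hs, hsv⟩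
      · obtain ⟨t, ht, htv⟩ := hT.1 ⟨v, trivial, hvD⟩ fun h => hv (Or.inl ⟨_, h, rfl⟩)
        exact ⟨t, Or.inl ⟨t, ht, rfl⟩, (deleteVerts_coe_adj G t _).1 htv⟩
    · rcases hp with ⟨p, hp, rfl⟩ | hp <;> rcases hq with ⟨q, hq, rfl⟩ | hq
      · exact hT.2 p hp q hq ((deleteVerts_coe_adj G p q).2 hpq)
      · exact hTD _ ⟨p, hp, rfl⟩ ((hD _).2 (Or.inr ⟨q, hq, hpq.symm⟩))
      · exact hTD _ ⟨q, hq, rfl⟩ ((hD _).2 (Or.inr ⟨p, hp, hpq⟩))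
      · exact hS.not_adj hp hq hpq
  calc indepDomNum G ≤ (Subtype.val '' T ∪ S).ncard := indepDomNum_le_ncard G hIDS
    _ ≤ (Subtype.val '' T).ncard + S.ncard := Set.ncard_union_le _ _
    _ = _ := by rw [Set.ncard_image_of_injective _ Subtype.val_injective, hTcard]

variable [Fintype V] [DecidableRel G.Adj] {G}

lemma MinimalCounterexample.degree_le_three (hG : MinimalCounterexample G) (v : V) :
    G.degree v ≤ 3 :=
  deg_eq_degree G v ▸ hG.1 v

variable [DecidableEq V]

lemma NoFourCycle.card_neighborFinset_inter_le_one (hG : NoFourCycle G) {v h : V}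
    (hh : h ∉ insert v (G.neighborFinset v)) :
    #(G.neighborFinset h ∩ insert v (G.neighborFinset v)) ≤ 1 := by
  simp only [Finset.mem_insert, SimpleGraph.mem_neighborFinset, not_or] at hh
  refine Finset.card_le_one.2 fun p hp q hq => by_contra fun hpq => hG ?_
  simp only [Finset.mem_inter, Finset.mem_insert, SimpleGraph.mem_neighborFinset] at hp hq
  obtain ⟨hhp, rfl | hvp⟩ := hp
  · exact absurd hhp.symm hh.2
  obtain ⟨hhq, rfl | hvq⟩ := hq
  · exact absurd hhq.symm hh.2
  exact ⟨v, p, h, q, hvp.ne, Ne.symm hh.1, hvq.ne, hhp.ne', hpq, hhq.ne, hvp, hhp.symm, hhq,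
    hvq.symm⟩

/-- `hD` says that `D` is the closed neighbourhood of `S`. The inequality combines
`14 i(G) > w(G)` with `14 i(G - D) ≤ w(G - D)` and `i(G) ≤ i(G - D) + |S|`. -/
lemma MinimalCounterexample.sum_degWeight_lt (hG : MinimalCounterexample G) {S D : Finset V}
    (hS : S.Nonempty) (hSi : G.IsIndepSet S)
    (hD : ∀ d, d ∈ D ↔ d ∈ S ∨ ∃ s ∈ S, G.Adj s d)
    (hD₁ : ∀ h ∉ D, #(G.neighborFinset h ∩ D) ≤ 1) :
    ∑ d ∈ D, degWeight (G.degree d) <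
      14 * #S + ∑ d ∈ D, ∑ h ∈ G.neighborFinset d \ D, weightGain (G.degree h) := by
  obtain ⟨s, hs⟩ := hS
  have hlt := hG.2.2.1
  have hind := indepDomNum_le_deleteVerts_add G hSi (D := D) (by simpa using hD)
  have hsub := hG.2.2.2 _ (deleteVerts_top_ne_top G ⟨s, (hD s).2 (Or.inl hs)⟩)
  have hwt := wtGraph_deleteVerts_add_le G D hD₁
  rw [Set.ncard_coe_finset] at hind
  omega

end Reduction

section Configuration

lemma Finset.eq_triple_of_card_eq_three {α : Type*} [DecidableEq α] {s : Finset α}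
    (hs : #s = 3) {p q : α} (hp : p ∈ s) (hq : q ∈ s) (hpq : p ≠ q) :
    ∃ r, r ≠ p ∧ r ≠ q ∧ s = {p, q, r} := by
  obtain ⟨r, hr⟩ : ∃ r, r ∈ s \ {p, q} := by
    refine Finset.card_pos.1 ?_
    rw [Finset.card_sdiff_of_subset (by simp [Finset.insert_subset_iff, hp, hq]),
      Finset.card_pair hpq, hs]
    norm_num
  simp only [Finset.mem_sdiff, Finset.mem_insert, Finset.mem_singleton, not_or] at hr
  refine ⟨r, hr.2.1, hr.2.2, (Finset.eq_of_subset_of_card_le ?_ ?_).symm⟩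
  · simp [Finset.insert_subset_iff, hp, hq, hr.1]
  · rw [hs, Finset.card_insert_of_notMem (by simp [hpq, Ne.symm hr.2.1]),
      Finset.card_pair (Ne.symm hr.2.2)]

variable {V : Type*} [Fintype V] {G : SimpleGraph V} [DecidableRel G.Adj]

lemma neighborFinset_eq_singleton_of_degree_eq_one {x v : V} (hx : G.degree x = 1)
    (hxv : G.Adj x v) : G.neighborFinset x = {v} :=
  (Finset.eq_of_subset_of_card_le (by simpa using hxv)
    (by rw [G.card_neighborFinset_eq_degree, hx, Finset.card_singleton])).symm

variable [DecidableEq V]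

/-- `sum_degWeight_lt` for `S = {v}`: without 4-cycles, no vertex outside `N[v]` has two
neighbours in `N[v]`. -/
lemma MinimalCounterexample.degWeight_add_sum_lt (hG : MinimalCounterexample G) (v : V) :
    degWeight (G.degree v) + ∑ d ∈ G.neighborFinset v, degWeight (G.degree d) <
      14 + ∑ d ∈ G.neighborFinset v,
        ∑ h ∈ (G.neighborFinset d).erase v, weightGain (G.degree h) := by
  have key := hG.sum_degWeight_lt (S := {v}) (D := insert v (G.neighborFinset v))
    (Finset.singleton_nonempty v) (by simp) (fun d => by simp)
    (fun h hh => hG.2.1.card_neighborFinset_inter_le_one hh)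
  have hself : G.neighborFinset v \ insert v (G.neighborFinset v) = ∅ :=
    Finset.sdiff_eq_empty_iff_subset.2 (Finset.subset_insert _ _)
  have hnbr : ∑ d ∈ G.neighborFinset v,
      ∑ h ∈ G.neighborFinset d \ insert v (G.neighborFinset v), weightGain (G.degree h) ≤
      ∑ d ∈ G.neighborFinset v, ∑ h ∈ (G.neighborFinset d).erase v, weightGain (G.degree h) :=
    Finset.sum_le_sum fun d _ => Finset.sum_le_sum_of_subset fun h hh => by
      simp only [Finset.mem_sdiff, Finset.mem_insert, not_or] at hh
      exact Finset.mem_erase.2 ⟨hh.2.1, hh.1⟩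
  simp only [Finset.sum_insert (G.notMem_neighborFinset_self v), hself, Finset.sum_empty,
    Finset.card_singleton] at key
  omega

lemma sum_weightGain_erase_le_four {u v w : V} (hu : G.degree u = 3) (huv : G.Adj u v)
    (huw : G.Adj u w) (hvw : v ≠ w) (hw : G.degree w = 3)
    (hleaf : ∀ y, G.Adj u y → G.degree y ≠ 1) :
    ∑ y ∈ (G.neighborFinset u).erase v, weightGain (G.degree y) ≤ 4 := by
  have hw' : w ∈ (G.neighborFinset u).erase v := by simpa [Ne.symm hvw] using huw
  have hcard : #(((G.neighborFinset u).erase v).erase w) = 1 := by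
    rw [Finset.card_erase_of_mem hw', Finset.card_erase_of_mem (by simpa using huv),
      G.card_neighborFinset_eq_degree, hu]
  have hrest := Finset.sum_le_card_nsmul (((G.neighborFinset u).erase v).erase w)
    (fun y => weightGain (G.degree y)) 3 fun y hy => by
      have huy : G.Adj u y := by simpa using Finset.mem_of_mem_erase (Finset.mem_of_mem_erase hy)
      have := (G.degree_pos_iff_exists_adj y).2 ⟨u, huy.symm⟩
      exact weightGain_le_three (by have := hleaf y huy; omega)
  rw [hcard, one_smul] at hrest
  rw [← Finset.add_sum_erase _ _ hw', hw]
  exact Nat.add_le_add (le_refl 1) hrest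

lemma exists_leaf_of_lt_sum_weightGain {a v : V} (ha : G.degree a ≤ 3) (hav : G.Adj a v)
    (h : 1 + degWeight (G.degree a) <
      ∑ t ∈ (G.neighborFinset a).erase v, weightGain (G.degree t)) :
    ∃ t₁ t₂, (G.neighborFinset a).erase v = {t₁, t₂} ∧ t₁ ≠ t₂ ∧
      G.degree t₁ = 1 ∧ G.degree t₂ ≤ 2 := by
  have hcard : #((G.neighborFinset a).erase v) = G.degree a - 1 := by
    rw [Finset.card_erase_of_mem (by simpa using hav), G.card_neighborFinset_eq_degree]
  have hle := sum_weightGain_le_five_mul_card ((G.neighborFinset a).erase v) fun t => G.degree t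
  rw [hcard] at hle
  obtain hlow | h3 : G.degree a ≤ 2 ∨ G.degree a = 3 := by omega
  · have := six_le_degWeight hlow
    omega
  obtain ⟨t₁, t₂, ht, hpair⟩ := Finset.card_eq_two.1 (hcard.trans (by rw [h3]))
  rw [hpair, Finset.sum_pair ht, h3, show degWeight 3 = 5 from rfl] at h
  rcases eq_one_of_six_lt_weightGain_add (by omega : 6 < _) with ⟨h₁, h₂⟩ | ⟨h₂, h₁⟩
  · exact ⟨t₁, t₂, hpair, ht, h₁, h₂⟩
  · exact ⟨t₂, t₁, hpair.trans (Finset.pair_comm _ _), ht.symm, h₂, h₁⟩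

/-- `sum_degWeight_lt` for `S = {x, a}`, where the leaf `x` hangs at a neighbour of `a`. -/
lemma MinimalCounterexample.sum_degWeight_lt_of_leaf (hG : MinimalCounterexample G)
    {x a v : V} (hNx : G.neighborFinset x = {v}) (hav : G.Adj a v) (hxa : x ≠ a) :
    degWeight 1 + degWeight (G.degree a) + ∑ d ∈ G.neighborFinset a, degWeight (G.degree d) <
      28 + ∑ d ∈ G.neighborFinset a,
        ∑ h ∈ ((G.neighborFinset d).erase a).erase x, weightGain (G.degree h) := by
  have hvNa : v ∈ G.neighborFinset a := by simpa using hav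
  have hxN (y : V) : x ∈ G.neighborFinset y ↔ y = v := by
    rw [G.mem_neighborFinset, G.adj_comm, ← G.mem_neighborFinset, hNx, Finset.mem_singleton]
  have hax : ¬ G.Adj a x := fun h => hav.ne ((hxN a).1 (by simpa using h))
  have hxNa : x ∉ insert a (G.neighborFinset a) := by simp [hxa, hxN, hav.ne]
  obtain ⟨D, hD⟩ : ∃ D, D = insert x (insert a (G.neighborFinset a)) := ⟨_, rfl⟩
  have hsum (F : V → ℕ) : ∑ d ∈ D, F d = F x + F a + ∑ d ∈ G.neighborFinset a, F d := by
    rw [hD, Finset.sum_insert hxNa, Finset.sum_insert (G.notMem_neighborFinset_self a), add_assoc]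
  have hmemD (d : V) :
      d ∈ D ↔ d ∈ ({x, a} : Finset V) ∨ ∃ s ∈ ({x, a} : Finset V), G.Adj s d := by
    simp only [hD, Finset.mem_insert, Finset.mem_singleton, exists_eq_or_imp, exists_eq_left,
      ← G.mem_neighborFinset, hNx]
    constructor
    · rintro (h | h | h) <;> simp [h]
    · rintro ((h | h) | (h | h)) <;> simp [h, hvNa]
  have hD₁ : ∀ h ∉ D, #(G.neighborFinset h ∩ D) ≤ 1 := by
    intro h hh
    have hhx : x ∉ G.neighborFinset h := fun hx => hh (by simp [hD, (hxN h).1 hx, hvNa])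
    refine (Finset.card_le_card fun y hy => ?_).trans
      (hG.2.1.card_neighborFinset_inter_le_one fun h' => hh (hD ▸ Finset.mem_insert_of_mem h'))
    simp only [hD, Finset.mem_inter, Finset.mem_insert] at hy ⊢
    rcases hy with ⟨hy, rfl | hy'⟩
    · exact absurd hy hhx
    · exact ⟨hy, hy'⟩
  have key := hG.sum_degWeight_lt (S := {x, a}) (D := D) ⟨x, by simp⟩
    (by simpa [Set.pairwise_pair, hxa] using ⟨fun h => hax h.symm, hax⟩) hmemD hD₁
  have hempty {d : V} (hd : G.neighborFinset d ⊆ D) : G.neighborFinset d \ D = ∅ :=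
    Finset.sdiff_eq_empty_iff_subset.2 hd
  have hx : G.neighborFinset x \ D = ∅ := hempty (by simp [hNx, hD, hvNa])
  have ha : G.neighborFinset a \ D = ∅ :=
    hempty (hD ▸ (Finset.subset_insert _ _).trans (Finset.subset_insert _ _))
  have hnbr : ∑ d ∈ G.neighborFinset a, ∑ h ∈ G.neighborFinset d \ D, weightGain (G.degree h) ≤
      ∑ d ∈ G.neighborFinset a, ∑ h ∈ ((G.neighborFinset d).erase a).erase x,
        weightGain (G.degree h) :=
    Finset.sum_le_sum fun d _ => Finset.sum_le_sum_of_subset fun h hh => by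
      simp only [hD, Finset.mem_sdiff, Finset.mem_insert, not_or] at hh
      simp [hh.1, hh.2.1, hh.2.2.1]
  rw [hsum, hsum, hx, ha, Finset.card_pair hxa,
    (G.card_neighborFinset_eq_degree x).symm.trans (by rw [hNx, Finset.card_singleton])] at key
  simp only [Finset.sum_empty] at key
  omega

/-- `v` and `a` are adjacent support vertices, with leaves `x` and `t₁`. -/
lemma MinimalCounterexample.false_of_adj_support_vertices (hG : MinimalCounterexample G)
    {v x u a t₁ t₂ : V} (hNv : G.neighborFinset v = {x, u, a}) (hNx : G.neighborFinset x = {v})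
    (hu : G.degree u = 3) (hav : G.Adj a v) (hNa : (G.neighborFinset a).erase v = {t₁, t₂})
    (ht : t₁ ≠ t₂) (ht₁ : G.degree t₁ = 1) (ht₂ : G.degree t₂ ≤ 2) : False := by
  have hNa' : G.neighborFinset a = insert v {t₁, t₂} := by
    rw [← hNa, Finset.insert_erase (by simpa using hav)]
  have hvt : v ∉ ({t₁, t₂} : Finset V) := hNa ▸ Finset.notMem_erase v _
  have hxa : x ≠ a := by
    rintro rfl
    have ht₁v : t₁ ∈ G.neighborFinset x := by simp [hNa']
    exact hvt (by simp_all)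
  have hat₁ : G.Adj a t₁ := (G.mem_neighborFinset a t₁).1 (by simp [hNa'])
  have hat₂ : G.Adj a t₂ := (G.mem_neighborFinset a t₂).1 (by simp [hNa'])
  have hNt₁ := neighborFinset_eq_singleton_of_degree_eq_one ht₁ hat₁.symm
  have key := hG.sum_degWeight_lt_of_leaf hNx hav hxa
  simp only [hNa', Finset.sum_insert hvt, Finset.sum_pair ht, hNt₁, ht₁, Finset.erase_singleton,
    Finset.erase_empty, Finset.sum_empty, show degWeight 1 = 9 from rfl] at key
  have hv : ∑ h ∈ ((G.neighborFinset v).erase a).erase x, weightGain (G.degree h) ≤ 1 := by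
    refine (Finset.sum_le_sum_of_subset fun y hy => ?_).trans
      (by simp [hu, weightGain, degWeight] : ∑ h ∈ {u}, weightGain (G.degree h) ≤ 1)
    simp only [hNv, Finset.mem_erase, Finset.mem_insert, Finset.mem_singleton] at hy ⊢
    tauto
  have ht₂sum := sum_weightGain_le_five_mul_card (((G.neighborFinset t₂).erase a).erase x)
    fun h => G.degree h
  have hcard : #(((G.neighborFinset t₂).erase a).erase x) ≤ G.degree t₂ - 1 := by
    rw [← G.card_neighborFinset_eq_degree, ← Finset.card_erase_of_mem (by simpa using hat₂.symm)]
    exact Finset.card_erase_le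
  have hwt₂ : 5 * (G.degree t₂ - 1) + 1 ≤ degWeight (G.degree t₂) := by
    have := (G.degree_pos_iff_exists_adj t₂).2 ⟨a, hat₂.symm⟩
    obtain h | h : G.degree t₂ = 1 ∨ G.degree t₂ = 2 := by omega
    all_goals rw [h]; decide
  have := five_le_degWeight (G.degree a)
  have := five_le_degWeight (G.degree v)
  omega

end Configuration

/-- A minimal counterexample contains no path `v–u–w` with `v,u,w` all of degree 3
such that `v` has a neighbor of degree 1 and `u` has no neighbor of degree 1. -/
theorem no_special_path {V : Type*} [Fintype V] (G : SimpleGraph V)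
    (hG : MinimalCounterexample G) :
    ¬ ∃ v u w x : V, v ≠ w ∧ G.Adj v u ∧ G.Adj u w ∧
      deg G v = 3 ∧ deg G u = 3 ∧ deg G w = 3 ∧
      G.Adj v x ∧ deg G x = 1 ∧ (∀ y, G.Adj u y → deg G y ≠ 1) := by
  classical
  rintro ⟨v, u, w, x, hvw, hvu, huw, hdv, hdu, hdw, hvx, hdx, hu₁⟩
  simp only [deg_eq_degree] at hdv hdu hdw hdx hu₁
  have hNx := neighborFinset_eq_singleton_of_degree_eq_one hdx hvx.symm
  have hxu : x ≠ u := fun h => by rw [h, hdu] at hdx; omega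
  obtain ⟨a, hax, hau, hNv⟩ := Finset.eq_triple_of_card_eq_three
    (by rw [G.card_neighborFinset_eq_degree, hdv]) (by simpa using hvx) (by simpa using hvu) hxu
  have hav : G.Adj a v := ((G.mem_neighborFinset v a).1 (by simp [hNv])).symm
  have key := hG.degWeight_add_sum_lt v
  simp only [hNv, Finset.sum_insert (by simp [hxu, Ne.symm hax] : x ∉ ({u, a} : Finset V)),
    Finset.sum_pair (Ne.symm hau), hNx, Finset.erase_singleton, Finset.sum_empty, hdv, hdx, hdu,
    show degWeight 1 = 9 from rfl, show degWeight 3 = 5 from rfl] at key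
  have hu := sum_weightGain_erase_le_four hdu hvu.symm huw hvw hdw hu₁
  obtain ⟨t₁, t₂, hNa, ht, hdt₁, hdt₂⟩ :=
    exists_leaf_of_lt_sum_weightGain (hG.degree_le_three a) hav (by omega)
  exact hG.false_of_adj_support_vertices hNv hNx hdu hav hNa ht hdt₁ hdt₂
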